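/- arXiv:1703.00979 — 5 statements merged into one kernel-verified Lean document; each statement's English description precedes it below -/
import Mathlib

section
/- Let G be a finite group in which every nilpotent subgroup generated by commutators has exponent dividing e. Then the exponent of the derived subgroup G' divides e. -/
/-!
Let `x ∈ G'` have order `p ^ k` and lie in a Sylow `p`-subgroup `P`. By the focal subgroup
theorem, `G' ∩ P` is generated by the commutators of `G` lying in `P`; as a subgroup of `P` it is
a `p`-group, hence nilpotent, so `x ^ e = 1`. In general, for every prime power `p ^ k` dividing
the order of `x ∈ G'`, some power of `x` lies in `G'` and has order exactly `p ^ k`.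
-/

open scoped commutatorElement

namespace Subgroup

variable {G : Type*} [Group G]

def IsGeneratedByCommutators (H : Subgroup G) : Prop :=
  ∃ S : Set G, (∀ x ∈ S, ∃ a b : G, x = ⁅a, b⁆) ∧ closure S = H

theorem isGeneratedByCommutators_focalSubgroup (H : Subgroup G) :
    H.focalSubgroup.IsGeneratedByCommutators :=
  ⟨_, by rintro _ ⟨-, x, -, u, hxu⟩; exact ⟨x, u, hxu⟩, (focalSubgroup_def H).symm⟩

theorem isNilpotent_focalSubgroup_of_sylow [Finite G] {p : ℕ} [Fact p.Prime] (P : Sylow p G) :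
    Group.IsNilpotent P.focalSubgroup :=
  (P.isPGroup'.to_le (focalSubgroup_le _)).isNilpotent

variable [Finite G] {e : ℕ}
  (h : ∀ H : Subgroup G, Group.IsNilpotent H → H.IsGeneratedByCommutators → ∀ x ∈ H, x ^ e = 1)
include h

theorem pow_eq_one_of_mem_commutator_of_orderOf_eq_prime_pow {p k : ℕ} [Fact p.Prime] {x : G}
    (hx : x ∈ _root_.commutator G) (hxp : orderOf x = p ^ k) : x ^ e = 1 := by
  obtain ⟨P, hP⟩ := (IsPGroup.of_card (p := p) (G := zpowers x)
    (by rw [Nat.card_zpowers, hxp])).exists_le_sylow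
  have hxP : x ∈ P.focalSubgroup := by
    rw [← commutator_inf_eq_focalSubgroup]
    exact ⟨hx, hP (mem_zpowers x)⟩
  exact h _ (isNilpotent_focalSubgroup_of_sylow P) (isGeneratedByCommutators_focalSubgroup _) x hxP

theorem orderOf_dvd_of_mem_commutator {x : G} (hx : x ∈ _root_.commutator G) : orderOf x ∣ e := by
  refine (Nat.dvd_iff_prime_pow_dvd_dvd _ _).2 fun p k hp hpk => ?_
  have : Fact p.Prime := ⟨hp⟩
  have hx0 : orderOf x ≠ 0 := (orderOf_pos x).ne'
  have hord := orderOf_pow_orderOf_div hx0 hpk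
  rw [← hord]
  exact orderOf_dvd_of_pow_eq_one
    (pow_eq_one_of_mem_commutator_of_orderOf_eq_prime_pow h (pow_mem hx _) hord)

end Subgroup

/-- If in a finite group `G` every nilpotent subgroup generated by commutators has
exponent dividing `e`, then the exponent of the derived subgroup `G'` divides `e`. -/
theorem exponent_of_commutator_subgroup_divides
    {G : Type*} [Group G] [Finite G] (e : ℕ)
    (h : ∀ H : Subgroup G, Group.IsNilpotent H →
      (∃ S : Set G, (∀ x ∈ S, ∃ a b : G, x = ⁅a, b⁆) ∧ Subgroup.closure S = H) →
      ∀ x ∈ H, x ^ e = 1) :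
    ∀ x ∈ commutator G, x ^ e = 1 := fun _ hx =>
  orderOf_dvd_iff_pow_eq_one.1 (Subgroup.orderOf_dvd_of_mem_commutator h hx)
end

section
/- Let G be a nilpotent group and suppose that G is generated by a commutator-closed subset X which is contained in a union of finitely many subgroups G_1, G_2, …, G_s of G. Then G can be written as the setwise product G = G_1 G_2 ⋯ G_s. -/
/-!
Write `γ m` for the lower central series. As `X` is commutator-closed and generates `G`, every
element of `γ m` is, modulo `γ (m + 1)`, a product of elements of `X ∩ γ m`: modulo `γ (m + 2)`
the commutator map `γ m × G → γ (m + 1)` is bimultiplicative, so it sends products of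
generators to products of their commutators, which lie in `X ∩ γ (m + 1)`. Modulo `γ (m + 1)`
the elements of `X ∩ γ m` are central, and each lies in some `G_i`, so they can be absorbed into
the factors of a product `g_1 ⋯ g_s`. By induction every element of `G` lies in
`G_1 ⋯ G_s · γ m` for all `m`, and `γ m` is trivial for large `m`.
-/

open Subgroup

open scoped commutatorElement

section Commutator

variable {G : Type*} [Group G] {a b c : G}

theorem commutatorElement_mul_right_of_commute (h : Commute ⁅a, c⁆ b) :
    ⁅a, b * c⁆ = ⁅a, b⁆ * ⁅a, c⁆ := by
  rw [commutatorElement_mul_right_eq_mul_conj, mul_assoc _ b, ← h.eq, mul_assoc,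
    mul_inv_cancel_right]

theorem commutatorElement_mul_left_of_commute (h : Commute ⁅b, c⁆ a) :
    ⁅a * b, c⁆ = ⁅b, c⁆ * ⁅a, c⁆ := by
  rw [commutatorElement_mul_left_eq_conj_mul, ← h.eq, mul_inv_cancel_right]

theorem commutatorElement_inv_right_of_commute (h : Commute ⁅a, b⁆ b) :
    ⁅a, b⁻¹⁆ = ⁅a, b⁆⁻¹ := by
  rw [commutatorElement_inv_right, ← commutatorElement_inv, mul_assoc, h.inv_left.eq,
    inv_mul_cancel_left]

theorem commutatorElement_inv_left_of_commute (h : Commute ⁅a, b⁆ a) :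
    ⁅a⁻¹, b⁆ = ⁅a, b⁆⁻¹ := by
  rw [commutatorElement_inv_left, ← commutatorElement_inv, mul_assoc, h.inv_left.eq,
    inv_mul_cancel_left]

theorem commutatorElement_mem_of_mem_closure {H K : Subgroup G} {S T : Set G}
    (hH : ⁅H, ⊤⁆ ≤ center G) (hS : S ⊆ H) (hST : ∀ s ∈ S, ∀ t ∈ T, ⁅s, t⁆ ∈ K)
    (ha : a ∈ closure S) (hb : b ∈ closure T) : ⁅a, b⁆ ∈ K := by
  have central : ∀ x ∈ H, ∀ y z, Commute ⁅x, y⁆ z := fun x hx y z =>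
    (mem_center_iff.mp (hH (commutator_mem_commutator hx (mem_top y))) z).symm
  have hSH : closure S ≤ H := closure_le H |>.mpr hS
  have right : ∀ s ∈ S, ∀ b ∈ closure T, ⁅s, b⁆ ∈ K := by
    intro s hs b hb
    induction hb using closure_induction with
    | mem t ht => exact hST s hs t ht
    | one => simp
    | mul b c _ _ ihb ihc =>
      rw [commutatorElement_mul_right_of_commute (central s (hS hs) c b)]
      exact mul_mem ihb ihc
    | inv b _ ihb =>
      rw [commutatorElement_inv_right_of_commute (central s (hS hs) b b)]
      exact inv_mem ihb
  induction ha using closure_induction with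
  | mem s hs => exact right s hs b hb
  | one => simp
  | mul a c _ hc iha ihc =>
    rw [commutatorElement_mul_left_of_commute (central c (hSH hc) b a)]
    exact mul_mem ihc iha
  | inv a ha iha =>
    rw [commutatorElement_inv_left_of_commute (central a (hSH ha) b a)]
    exact inv_mem iha

end Commutator

theorem QuotientGroup.map_mk'_le_center {G : Type*} [Group G] {H N : Subgroup G} [N.Normal]
    (h : ⁅H, ⊤⁆ ≤ N) : H.map (QuotientGroup.mk' N) ≤ center (G ⧸ N) := by
  rintro _ ⟨x, hx, rfl⟩
  refine mem_center_iff.mpr fun y => QuotientGroup.induction_on y fun y => ?_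
  refine (commutatorElement_eq_one_iff_commute.mp ?_).symm.eq
  exact (QuotientGroup.eq_one_iff _).mpr (h (commutator_mem_commutator hx (mem_top y)))

theorem List.prod_ofFn_mulSingle {M : Type*} [Monoid M] :
    ∀ {n : ℕ} (i : Fin n) (x : M), (List.ofFn (Pi.mulSingle i x)).prod = x
  | n + 1, i, x => by
    rw [List.ofFn_succ, List.prod_cons]
    cases i using Fin.cases with
    | zero => simp
    | succ i =>
      have : (fun j : Fin n => (Pi.mulSingle i.succ x : Fin (n + 1) → M) j.succ) =
          Pi.mulSingle i x := by
        ext j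
        simp [Pi.mulSingle_apply]
      rw [Pi.mulSingle_eq_of_ne (Fin.succ_ne_zero i).symm, one_mul, this,
        List.prod_ofFn_mulSingle i x]

theorem List.prod_ofFn_mul_of_mem_center {G : Type*} [Group G] :
    ∀ {n : ℕ} (f g : Fin n → G), (∀ i, g i ∈ center G) →
      (List.ofFn (f * g)).prod = (List.ofFn f).prod * (List.ofFn g).prod
  | 0, _, _, _ => by simp
  | n + 1, f, g, hg => by
    simp only [List.ofFn_succ, List.prod_cons, Pi.mul_apply]
    have := List.prod_ofFn_mul_of_mem_center (fun i => f i.succ) (fun i => g i.succ)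
      (fun i => hg i.succ)
    simp only [Pi.mul_def] at this
    rw [this, mul_assoc, mul_assoc, ← mul_assoc (g 0), ← mem_center_iff.mp (hg 0), mul_assoc]

theorem exists_prod_ofFn_eq_of_mem_iSup {G : Type*} [Group G] {n : ℕ} {H : Fin n → Subgroup G}
    (hH : ∀ i, H i ≤ center G) {z : G} (hz : z ∈ ⨆ i, H i) :
    ∃ f : Fin n → G, (∀ i, f i ∈ H i) ∧ (List.ofFn f).prod = z := by
  classical
  refine Subgroup.iSup_induction H (C := fun z => ∃ f : Fin n → G, (∀ i, f i ∈ H i) ∧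
    (List.ofFn f).prod = z) hz (fun i x hx => ?_) ⟨fun _ => 1, fun i => one_mem _, by simp⟩
    fun x y hx hy => ?_
  · refine ⟨Pi.mulSingle i x, fun j => ?_, List.prod_ofFn_mulSingle i x⟩
    rcases eq_or_ne j i with rfl | hji
    · simpa using hx
    · simp [Pi.mulSingle_eq_of_ne hji]
  · obtain ⟨f, hf, rfl⟩ := hx
    obtain ⟨g, hg, rfl⟩ := hy
    exact ⟨f * g, fun i => mul_mem (hf i) (hg i),
      List.prod_ofFn_mul_of_mem_center f g fun i => hH i (hg i)⟩

section CommutatorClosed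

variable {G : Type*} [Group G] {X : Set G}

theorem lowerCentralSeries_le_closure_inter_sup (hX : ∀ x ∈ X, ∀ y ∈ X, ⁅x, y⁆ ∈ X)
    (hgen : closure X = ⊤) (m : ℕ) :
    (⊤ : Subgroup G).lowerCentralSeries m ≤
      closure (X ∩ (⊤ : Subgroup G).lowerCentralSeries m) ⊔
        (⊤ : Subgroup G).lowerCentralSeries (m + 1) := by
  induction m with
  | zero => simp [hgen]
  | succ m ih =>
    set N := (⊤ : Subgroup G).lowerCentralSeries (m + 2)
    set π := QuotientGroup.mk' N
    rw [Subgroup.lowerCentralSeries_succ, commutator_le]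
    intro a ha g _
    obtain ⟨u, hu, d, hd, rfl⟩ := mem_sup_of_normal_right.mp (ih ha)
    rw [commutatorElement_mul_left_eq_conj_mul]
    refine mul_mem (mem_sup_right ?_) ?_
    · exact (inferInstance : N.Normal).conj_mem _ (commutator_mem_commutator hd (mem_top g)) u
    -- Pass to `G ⧸ γ (m + 2)`, where the image of `γ (m + 1)` is central.
    rw [← QuotientGroup.ker_mk' N, ← comap_map_eq, mem_comap, map_commutatorElement,
      MonoidHom.map_closure]
    refine commutatorElement_mem_of_mem_closure
      (H := ((⊤ : Subgroup G).lowerCentralSeries m).map π)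
      (S := π '' (X ∩ (⊤ : Subgroup G).lowerCentralSeries m)) (T := π '' X) ?_ ?_ ?_ ?_ ?_
    · rw [← map_top_of_surjective π (QuotientGroup.mk'_surjective N), ← map_commutator,
        ← Subgroup.lowerCentralSeries_succ]
      exact QuotientGroup.map_mk'_le_center (Subgroup.lowerCentralSeries_succ _ _).ge
    · exact Set.image_mono Set.inter_subset_right
    · rintro _ ⟨x, ⟨hx, hxm⟩, rfl⟩ _ ⟨y, hy, rfl⟩
      exact subset_closure ⟨⁅x, y⁆, ⟨hX x hx y hy, commutator_mem_commutator hxm (mem_top y)⟩,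
        map_commutatorElement π x y⟩
    · rw [← MonoidHom.map_closure]
      exact mem_map_of_mem π hu
    · rw [← MonoidHom.map_closure, hgen]
      exact mem_map_of_mem π (mem_top g)

theorem exists_prod_ofFn_inv_mul_mem_lowerCentralSeries (hX : ∀ x ∈ X, ∀ y ∈ X, ⁅x, y⁆ ∈ X)
    (hgen : closure X = ⊤) {s : ℕ} {Gs : Fin s → Subgroup G} (hcov : X ⊆ ⋃ i, (Gs i : Set G))
    (g : G) (m : ℕ) : ∃ f : Fin s → G, (∀ i, f i ∈ Gs i) ∧
      (List.ofFn f).prod⁻¹ * g ∈ (⊤ : Subgroup G).lowerCentralSeries m := by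
  induction m with
  | zero => exact ⟨fun _ => 1, fun _ => one_mem _, mem_top _⟩
  | succ m ih =>
    obtain ⟨f, hf, hfg⟩ := ih
    set N := (⊤ : Subgroup G).lowerCentralSeries (m + 1)
    set π := QuotientGroup.mk' N
    have hcentral : π ((List.ofFn f).prod⁻¹ * g) ∈ ⨆ i, (Gs i).map π ⊓ center (G ⧸ N) := by
      have : (List.ofFn f).prod⁻¹ * g ∈ closure (X ∩ (⊤ : Subgroup G).lowerCentralSeries m) ⊔ N :=
        lowerCentralSeries_le_closure_inter_sup hX hgen m hfg
      rw [← QuotientGroup.ker_mk' N, ← comap_map_eq, mem_comap, MonoidHom.map_closure] at this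
      refine closure_le _ |>.mpr ?_ this
      rintro _ ⟨x, ⟨hx, hxm⟩, rfl⟩
      obtain ⟨i, hi⟩ := Set.mem_iUnion.mp (hcov hx)
      exact mem_iSup_of_mem i ⟨mem_map_of_mem π hi, QuotientGroup.map_mk'_le_center
        (Subgroup.lowerCentralSeries_succ _ _).ge (mem_map_of_mem π hxm)⟩
    obtain ⟨z, hz, hzprod⟩ := exists_prod_ofFn_eq_of_mem_iSup (fun i => inf_le_right) hcentral
    choose y hy hyz using fun i => mem_map.mp (hz i).1
    refine ⟨f * y, fun i => mul_mem (hf i) (hy i), ?_⟩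
    have hprod : π (List.ofFn (f * y)).prod = π (List.ofFn f).prod * (List.ofFn z).prod := by
      rw [map_list_prod, map_list_prod, List.map_ofFn, List.map_ofFn,
        ← List.prod_ofFn_mul_of_mem_center _ _ fun i => (hz i).2]
      congr 2
      ext i
      simp [hyz]
    refine (QuotientGroup.ker_mk' N).le (MonoidHom.mem_ker.mpr ?_)
    change π ((List.ofFn (f * y)).prod⁻¹ * g) = 1
    rw [map_mul, map_inv, hprod, hzprod, map_mul, map_inv]
    group

end CommutatorClosed

/-- If a nilpotent group `G` is generated by a commutator-closed subset `X` which is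
contained in the union of finitely many subgroups `G_1, …, G_s`, then `G` equals the
setwise product `G_1 G_2 ⋯ G_s`. -/
theorem nilpotent_generated_by_covered_commClosed_set_eq_product
    {G : Type*} [Group G] (hnil : Group.IsNilpotent G)
    (X : Set G) (hX : ∀ x ∈ X, ∀ y ∈ X, ⁅x, y⁆ ∈ X)
    (hgen : Subgroup.closure X = ⊤) (s : ℕ) (Gs : Fin s → Subgroup G)
    (hcov : X ⊆ ⋃ i, (Gs i : Set G)) :
    ∀ g : G, ∃ f : Fin s → G, (∀ i, f i ∈ Gs i) ∧ g = (List.ofFn f).prod := by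
  intro g
  obtain ⟨n, hn⟩ := Subgroup.nilpotent_iff_lowerCentralSeries.mp hnil
  obtain ⟨f, hf, hfg⟩ := exists_prod_ofFn_inv_mul_mem_lowerCentralSeries hX hgen hcov g n
  rw [hn, mem_bot, inv_mul_eq_one] at hfg
  exact ⟨f, hf, hfg.symm⟩
end

section
/- Let w be a multilinear commutator word and G a profinite group having countably many soluble subgroups whose union contains the set of all w-values in G. Then the verbal subgroup w(G) is soluble-by-finite. -/
/-- Formal words built by nesting commutators of indeterminates. -/
inductive GpWord : Type
  | var : ℕ → GpWord
  | comm : GpWord → GpWord → GpWord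

namespace GpWord

open scoped commutatorElement

/-- The set of indeterminates occurring in a word. -/
def vars : GpWord → Finset ℕ
  | var i => {i}
  | comm u v => u.vars ∪ v.vars

/-- A multilinear (outer) commutator word: each indeterminate is one, and the
commutator of two multilinear commutator words in disjoint indeterminates is one. -/
inductive IsMlc : GpWord → Prop
  | var (i : ℕ) : IsMlc (var i)
  | comm {u v : GpWord} : IsMlc u → IsMlc v → Disjoint u.vars v.vars → IsMlc (u.comm v)

/-- Evaluation of a word in a group under an assignment of the indeterminates. -/
def eval {G : Type*} [Group G] (f : ℕ → G) : GpWord → G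
  | var i => f i
  | comm u v => ⁅eval f u, eval f v⁆

end GpWord

/-- The set of `w`-values in `G`. -/
def wValues (w : GpWord) (G : Type*) [Group G] : Set G :=
  {g | ∃ f : ℕ → G, GpWord.eval f w = g}

/-!
Fix an assignment `a` and a normal subgroup `N`. The ratios `x * y⁻¹` of values of `w` at
assignments congruent to `a` modulo `N` generate a subgroup `R w` that lies in `N` and is
normalized by `N`; commutator identities then give `⁅R u, R v⁆ ≤ R ⁅u, v⁆` for disjoint `u, v`, so
by induction on `w` the `depth w`-th derived subgroup of `N` lies in `R w`. Hence if all those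
values lie in one soluble subgroup, `N` is soluble.

In a profinite group the `w`-values form a compact set covered by the countably many closed
soluble subgroups `closure (Gs i)`, so by Baire one of them contains a relatively open piece of
it, which contains all the values of `w` at the assignments congruent to some `a` modulo some open
normal `N`. Then `N ∩ w(G)` is an open, hence finite-index, soluble subgroup of `w(G)`.
-/

open scoped commutatorElement

section Group

variable {G : Type*} [Group G]

instance Group.isSolvable_quotient_derivedSeries (n : ℕ) :
    Group.IsSolvable (G ⧸ derivedSeries G n) :=
  ⟨n, by rw [← map_derivedSeries_eq (QuotientGroup.mk'_surjective _), QuotientGroup.map_mk'_self]⟩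

theorem Subgroup.isSolvable_of_map_derivedSeries_le {H D : Subgroup G} [Group.IsSolvable D]
    {n : ℕ} (h : (derivedSeries H n).map H.subtype ≤ D) : Group.IsSolvable H := by
  let ι : derivedSeries H n →* D :=
    (H.subtype.comp (derivedSeries H n).subtype).codRestrict D fun x => h ⟨x, x.2, rfl⟩
  have : Group.IsSolvable (derivedSeries H n) :=
    Group.isSolvable_of_isSolvable_injective (f := ι) fun _ _ hxy =>
      Subtype.ext (Subtype.ext (congrArg (Subtype.val : D → G) hxy))
  exact (Group.isSolvable_iff_subgroup_quotient _).mpr ⟨this, inferInstance⟩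

instance Subgroup.isSolvable_subgroupOf (H K : Subgroup G) [Group.IsSolvable H] :
    Group.IsSolvable (H.subgroupOf K) :=
  Group.isSolvable_of_isSolvable_injective (f := K.subtype.subgroupComap H) fun _ _ hxy =>
    Subtype.ext (Subtype.ext (congrArg (Subtype.val : H → G) hxy))

theorem Subgroup.commutatorElement_mem_of_mem_closure {N R : Subgroup G}
    (hR : N ≤ Subgroup.normalizer (R : Set G)) {S : Set G} (hS : Subgroup.closure S ≤ N) {a : G}
    (ha : ∀ s ∈ S, ⁅a, s⁆ ∈ R) {s : G} (hs : s ∈ Subgroup.closure S) : ⁅a, s⁆ ∈ R := by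
  induction hs using Subgroup.closure_induction with
  | mem s hs => exact ha s hs
  | one => simp
  | mul x y hx _ ihx ihy =>
    rw [commutatorElement_mul_right_eq_mul_conj, mul_assoc _ x, mul_assoc]
    exact mul_mem ihx ((hR (hS hx) _).mp ihy)
  | inv x hx ihx =>
    rw [commutatorElement_inv_right, ← commutatorElement_inv]
    exact (Subgroup.mem_normalizer_iff''.mp (hR (hS hx)) _).mp (inv_mem ihx)

end Group

section Topology

variable {G : Type*} [Group G] [TopologicalSpace G] [IsTopologicalGroup G]

theorem Subgroup.commutator_topologicalClosure_le (A B : Subgroup G) :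
    ⁅A.topologicalClosure, B.topologicalClosure⁆ ≤ ⁅A, B⁆.topologicalClosure :=
  Subgroup.commutator_le.mpr fun _ ha _ hb =>
    map_mem_closure₂ (f := fun a b : G => ⁅a, b⁆)
      (by simp only [Function.uncurry_def, commutatorElement_def]; fun_prop) ha hb
      fun _ ha' _ hb' => Subgroup.commutator_mem_commutator ha' hb'

theorem Subgroup.map_derivedSeries_topologicalClosure_le (H : Subgroup G) (n : ℕ) :
    (derivedSeries H.topologicalClosure n).map H.topologicalClosure.subtype ≤
      ((derivedSeries H n).map H.subtype).topologicalClosure := by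
  induction n with
  | zero =>
    simp only [derivedSeries_zero, ← MonoidHom.range_eq_map, Subgroup.range_subtype]
    exact le_rfl
  | succ n ih =>
    simp only [derivedSeries_succ, Subgroup.map_commutator]
    exact (Subgroup.commutator_mono ih ih).trans (commutator_topologicalClosure_le _ _)

instance Subgroup.isSolvable_topologicalClosure [T2Space G] (H : Subgroup G)
    [hH : Group.IsSolvable H] : Group.IsSolvable H.topologicalClosure := by
  obtain ⟨n, hn⟩ := hH
  refine isSolvable_of_map_derivedSeries_le (D := ⊥) (n := n) ?_
  calc _ ≤ _ := map_derivedSeries_topologicalClosure_le H n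
    _ = ⊥ := by
      rw [hn, Subgroup.map_bot, ← SetLike.coe_set_eq, coe_topologicalClosure_bot, closure_singleton]
      rfl

theorem IsCompact.exists_isOpen_inter_nonempty_subset_of_subset_iUnion {X ι : Type*}
    [TopologicalSpace X] [T2Space X] [Countable ι] {S : Set X} (hS : IsCompact S)
    (hne : S.Nonempty) {C : ι → Set X} (hC : ∀ i, IsClosed (C i)) (hcov : S ⊆ ⋃ i, C i) :
    ∃ i, ∃ U, IsOpen U ∧ (U ∩ S).Nonempty ∧ U ∩ S ⊆ C i := by
  have : CompactSpace S := isCompact_iff_compactSpace.mp hS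
  have : Nonempty S := hne.to_subtype
  obtain ⟨i, x, hx⟩ := nonempty_interior_of_iUnion_of_closed
    (fun i => (hC i).preimage continuous_subtype_val (f := ((↑) : S → X)))
    (by rw [← Set.preimage_iUnion]; exact Set.eq_univ_of_forall fun x => hcov x.2)
  obtain ⟨U, hU, hUi⟩ := isOpen_induced_iff.mp (isOpen_interior (s := ((↑) : S → X) ⁻¹' C i))
  refine ⟨i, U, hU, ⟨x, ?_, x.2⟩, fun y hy => ?_⟩
  · exact (Set.ext_iff.mp hUi x).mpr hx
  · exact interior_subset (s := ((↑) : S → X) ⁻¹' C i)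
      ((Set.ext_iff.mp hUi ⟨y, hy.2⟩).mp hy.1)

end Topology

namespace GpWord

variable {G : Type*} [Group G]

def depth : GpWord → ℕ
  | var _ => 0
  | comm u v => max u.depth v.depth + 1

theorem eval_congr {f g : ℕ → G} :
    ∀ w : GpWord, (∀ i ∈ w.vars, f i = g i) → eval f w = eval g w
  | var i, h => h i (by simp [vars])
  | comm u v, h => by
    simp only [eval]
    rw [eval_congr u fun i hi => h i (by simp [vars, hi]),
      eval_congr v fun i hi => h i (by simp [vars, hi])]

theorem eval_map {H : Type*} [Group H] (φ : G →* H) (f : ℕ → G) :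
    ∀ w : GpWord, eval (φ ∘ f) w = φ (eval f w)
  | var _ => rfl
  | comm u v => by simp only [eval, eval_map φ f u, eval_map φ f v, map_commutatorElement]

theorem continuous_eval [TopologicalSpace G] [IsTopologicalGroup G] :
    ∀ w : GpWord, Continuous fun f : ℕ → G => eval f w
  | var i => continuous_apply i
  | comm u v => by
    simp only [eval, commutatorElement_def]
    have := continuous_eval u
    have := continuous_eval v
    fun_prop

theorem isCompact_wValues [TopologicalSpace G] [IsTopologicalGroup G] [CompactSpace G]
    (w : GpWord) : IsCompact (wValues w G) :=
  isCompact_range (continuous_eval w)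

section Modulo

variable (N : Subgroup G)

def valuesModulo (f : ℕ → G) (w : GpWord) : Set G :=
  {x | ∃ f' : ℕ → G, (∀ i, (f' i : G ⧸ N) = f i) ∧ eval f' w = x}

def ratioSubgroup (f : ℕ → G) (w : GpWord) : Subgroup G :=
  Subgroup.closure {z | ∃ x ∈ valuesModulo N f w, ∃ y ∈ valuesModulo N f w, x * y⁻¹ = z}

variable {N} {f : ℕ → G}

theorem eval_mem_valuesModulo (w : GpWord) : eval f w ∈ valuesModulo N f w :=
  ⟨f, fun _ => rfl, rfl⟩

theorem valuesModulo_subset_wValues (w : GpWord) : valuesModulo N f w ⊆ wValues w G :=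
  fun _ ⟨g, _, hg⟩ => ⟨g, hg⟩

theorem mul_inv_mem_ratioSubgroup {w : GpWord} {x y : G} (hx : x ∈ valuesModulo N f w)
    (hy : y ∈ valuesModulo N f w) : x * y⁻¹ ∈ ratioSubgroup N f w :=
  Subgroup.subset_closure ⟨x, hx, y, hy, rfl⟩

theorem ratioSubgroup_le_of_subset {w : GpWord} {D : Subgroup G}
    (h : valuesModulo N f w ⊆ D) : ratioSubgroup N f w ≤ D :=
  (Subgroup.closure_le D).mpr fun _ ⟨_, hx, _, hy, hz⟩ => hz ▸ mul_mem (h hx) (inv_mem (h hy))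

theorem commutatorElement_mem_valuesModulo {u v : GpWord} (huv : Disjoint u.vars v.vars)
    {x y : G} (hx : x ∈ valuesModulo N f u) (hy : y ∈ valuesModulo N f v) :
    ⁅x, y⁆ ∈ valuesModulo N f (u.comm v) := by
  classical
  obtain ⟨g, hg, rfl⟩ := hx
  obtain ⟨h, hh, rfl⟩ := hy
  refine ⟨fun i => if i ∈ u.vars then g i else h i, fun i => ?_, ?_⟩
  · by_cases hi : i ∈ u.vars <;> simp only [hi, if_true, if_false, hg, hh]
  · simp only [eval]
    rw [eval_congr u fun i hi => if_pos hi,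
      eval_congr v fun i hi => if_neg (Finset.disjoint_right.mp huv hi)]

variable [N.Normal]

theorem mk_eq_of_mem_valuesModulo {w : GpWord} {x : G} (hx : x ∈ valuesModulo N f w) :
    (x : G ⧸ N) = (eval f w : G) := by
  obtain ⟨g, hg, rfl⟩ := hx
  have hgf : (QuotientGroup.mk' N ∘ g) = QuotientGroup.mk' N ∘ f := funext hg
  exact (eval_map _ g w).symm.trans (hgf ▸ eval_map _ f w)

theorem conj_mem_valuesModulo {w : GpWord} {t x : G} (ht : t ∈ N)
    (hx : x ∈ valuesModulo N f w) : t * x * t⁻¹ ∈ valuesModulo N f w := by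
  obtain ⟨g, hg, rfl⟩ := hx
  refine ⟨fun i => t * g i * t⁻¹, fun i => ?_, eval_map (MulAut.conj t).toMonoidHom g w⟩
  rw [← hg i, QuotientGroup.mk_mul, QuotientGroup.mk_mul, QuotientGroup.mk_inv,
    (QuotientGroup.eq_one_iff t).mpr ht]
  group

theorem ratioSubgroup_le (w : GpWord) : ratioSubgroup N f w ≤ N :=
  (Subgroup.closure_le N).mpr fun _ ⟨_, hx, _, hy, hz⟩ => hz ▸ by
    rw [SetLike.mem_coe, ← QuotientGroup.eq_one_iff, QuotientGroup.mk_mul, QuotientGroup.mk_inv,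
      mk_eq_of_mem_valuesModulo hx, mk_eq_of_mem_valuesModulo hy, mul_inv_cancel]

theorem le_normalizer_ratioSubgroup (w : GpWord) :
    N ≤ Subgroup.normalizer (ratioSubgroup N f w : Set G) :=
  Subgroup.le_normalizer_closure_iff.mpr fun t ht _ ⟨x, hx, y, hy, hz⟩ => hz ▸ by
    have : t * (x * y⁻¹) * t⁻¹ = (t * x * t⁻¹) * (t * y * t⁻¹)⁻¹ := by group
    rw [this]
    exact mul_inv_mem_ratioSubgroup (conj_mem_valuesModulo ht hx) (conj_mem_valuesModulo ht hy)

theorem le_ratioSubgroup_var (i : ℕ) : N ≤ ratioSubgroup N f (var i) := by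
  intro n hn
  have hnf : n * f i ∈ valuesModulo N f (var i) := by
    refine ⟨Function.update f i (n * f i), fun j => ?_, Function.update_self ..⟩
    rcases eq_or_ne j i with rfl | hj
    · rw [Function.update_self, QuotientGroup.mk_mul, (QuotientGroup.eq_one_iff n).mpr hn,
        one_mul]
    · rw [Function.update_of_ne hj]
  simpa [eval] using mul_inv_mem_ratioSubgroup hnf (eval_mem_valuesModulo (var i))

theorem commutator_ratioSubgroup_le {u v : GpWord} (huv : Disjoint u.vars v.vars) :
    ⁅ratioSubgroup N f u, ratioSubgroup N f v⁆ ≤ ratioSubgroup N f (u.comm v) := by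
  have hR := le_normalizer_ratioSubgroup (N := N) (f := f) (u.comm v)
  have value_ratio : ∀ x ∈ valuesModulo N f u, ∀ y ∈ valuesModulo N f v,
      ∀ y' ∈ valuesModulo N f v, ⁅x, y * y'⁻¹⁆ ∈ ratioSubgroup N f (u.comm v) := by
    intro x hx y hy y' hy'
    have hσ : y * y'⁻¹ ∈ N := ratioSubgroup_le v (mul_inv_mem_ratioSubgroup hy hy')
    have : ⁅x, y * y'⁻¹⁆ = ⁅x, y⁆ *
        ⁅(y * y'⁻¹) * x * (y * y'⁻¹)⁻¹, (y * y'⁻¹) * y' * (y * y'⁻¹)⁻¹⁆⁻¹ := by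
      simp only [commutatorElement_def]
      group
    rw [this]
    exact mul_inv_mem_ratioSubgroup (commutatorElement_mem_valuesModulo huv hx hy)
      (commutatorElement_mem_valuesModulo huv (conj_mem_valuesModulo hσ hx)
        (conj_mem_valuesModulo hσ hy'))
  have value_left : ∀ x ∈ valuesModulo N f u, ∀ s ∈ ratioSubgroup N f v,
      ⁅x, s⁆ ∈ ratioSubgroup N f (u.comm v) := fun x hx _ hs =>
    Subgroup.commutatorElement_mem_of_mem_closure hR (ratioSubgroup_le v)
      (fun _ ⟨y, hy, y', hy', hz⟩ => hz ▸ value_ratio x hx y hy y' hy') hs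
  have ratio_left : ∀ x ∈ valuesModulo N f u, ∀ x' ∈ valuesModulo N f u,
      ∀ s ∈ ratioSubgroup N f v, ⁅x * x'⁻¹, s⁆ ∈ ratioSubgroup N f (u.comm v) := by
    intro x hx x' hx' s hs
    have hσ : x * x'⁻¹ ∈ N := ratioSubgroup_le u (mul_inv_mem_ratioSubgroup hx hx')
    have : ⁅x * x'⁻¹, s⁆ = (x * x'⁻¹) * ⁅x', s⁆⁻¹ * (x * x'⁻¹)⁻¹ * ⁅x, s⁆ := by
      simp only [commutatorElement_def]
      group
    rw [this]
    exact mul_mem ((hR hσ _).mp (inv_mem (value_left x' hx' s hs))) (value_left x hx s hs)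
  rw [Subgroup.commutator_le]
  intro r hr s hs
  rw [← commutatorElement_inv]
  refine inv_mem (Subgroup.commutatorElement_mem_of_mem_closure hR (ratioSubgroup_le u)
    (fun _ ⟨x, hx, x', hx', hz⟩ => hz ▸ ?_) hr)
  rw [← commutatorElement_inv]
  exact inv_mem (ratio_left x hx x' hx' s hs)

theorem map_derivedSeries_le_ratioSubgroup {w : GpWord} (hw : w.IsMlc) :
    (derivedSeries N w.depth).map N.subtype ≤ ratioSubgroup N f w := by
  induction hw with
  | var i =>
    rw [depth, derivedSeries_zero, ← MonoidHom.range_eq_map, Subgroup.range_subtype]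
    exact le_ratioSubgroup_var i
  | @comm u v _ _ huv ihu ihv =>
    have hmono {k : ℕ} (hk : k ≤ max u.depth v.depth) :
        (derivedSeries N (max u.depth v.depth)).map N.subtype ≤
          (derivedSeries N k).map N.subtype :=
      Subgroup.map_mono (derivedSeries_antitone N hk)
    rw [depth, derivedSeries_succ, Subgroup.map_commutator]
    exact (Subgroup.commutator_mono ((hmono (le_max_left _ _)).trans ihu)
      ((hmono (le_max_right _ _)).trans ihv)).trans (commutator_ratioSubgroup_le huv)

theorem isSolvable_of_valuesModulo_subset {w : GpWord} (hw : w.IsMlc) {D : Subgroup G}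
    [Group.IsSolvable D] (h : valuesModulo N f w ⊆ D) : Group.IsSolvable N :=
  Subgroup.isSolvable_of_map_derivedSeries_le
    ((map_derivedSeries_le_ratioSubgroup hw).trans (ratioSubgroup_le_of_subset h))

end Modulo

end GpWord

/-- Theorem 7: if all `w`-values of a profinite group `G` (for a multilinear
commutator word `w`) are contained in a union of countably many soluble subgroups,
then the verbal subgroup `w(G)` is soluble-by-finite. -/
theorem wValues_covered_by_countably_many_soluble_imp_solubleByFinite
    {G : Type*} [Group G] [TopologicalSpace G] [IsTopologicalGroup G]
    [CompactSpace G] [T2Space G] [TotallyDisconnectedSpace G]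
    (w : GpWord) (hw : w.IsMlc) (Gs : ℕ → Subgroup G)
    (hsol : ∀ i, IsSolvable (Gs i))
    (hcov : wValues w G ⊆ ⋃ i, (Gs i : Set G)) :
    ∃ H : Subgroup ((Subgroup.closure (wValues w G)).topologicalClosure),
      IsSolvable H ∧ H.FiniteIndex := by
  obtain ⟨i, U, hU, ⟨_, hxU, a, rfl⟩, hUC⟩ :=
    (GpWord.isCompact_wValues w).exists_isOpen_inter_nonempty_subset_of_subset_iUnion
      ⟨_, 1, rfl⟩ (fun i => (Gs i).isClosed_topologicalClosure)
      (hcov.trans (Set.iUnion_mono fun i => subset_closure))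
  obtain ⟨N, hNU⟩ := ProfiniteGrp.exist_openNormalSubgroup_sub_open_nhds_of_one
    (hU.preimage (continuous_const_mul (GpWord.eval a w))) (by simpa using hxU)
  have : Group.IsSolvable (Gs i) := hsol i
  have : Group.IsSolvable N.toSubgroup := by
    refine GpWord.isSolvable_of_valuesModulo_subset (f := a) hw (D := (Gs i).topologicalClosure)
      fun x hx => hUC ⟨?_, GpWord.valuesModulo_subset_wValues w hx⟩
    have hmem : (GpWord.eval a w)⁻¹ * x ∈ N.toSubgroup :=
      QuotientGroup.eq.mp (GpWord.mk_eq_of_mem_valuesModulo hx).symm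
    simpa using hNU hmem
  have : N.toSubgroup.FiniteIndex := Subgroup.finiteIndex_of_finite_quotient
  exact ⟨N.toSubgroup.subgroupOf _, (inferInstance : Group.IsSolvable _), inferInstance⟩
end

section
/- Let G be a group, k a positive integer, H a normal subgroup of G, and a_1, …, a_{2^k} elements of G such that δ_k(a_1 h_1, …, a_{2^k} h_{2^k}) = 1 for all h_1, …, h_{2^k} ∈ H. Then H is soluble of derived length at most k. -/
open scoped commutatorElement

/-- Evaluation of the derived word `δ_k` on `2^k` variables: `δ_0 = x_1` and
`δ_k = [δ_{k-1}(x_1,…,x_{2^{k-1}}), δ_{k-1}(x_{2^{k-1}+1},…,x_{2^k})]`.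
Here `deltaEval k g` uses the values `g 0, …, g (2^k - 1)`. -/
def deltaEval {G : Type*} [Group G] : ℕ → (ℕ → G) → G
  | 0, g => g 0
  | k + 1, g => ⁅deltaEval k g, deltaEval k (fun i => g (i + 2 ^ k))⁆

/-!
All values of `δ_{k+1}(a_i h_i)` (`h_i ∈ H`) are commutators `⁅u, v⁆` of a value `u` of `δ_k` on
the first half of the `a_i` and a value `v` on the second half; every such set of values is
stable under conjugation by `H`, and its right quotients `v' v⁻¹` lie in `H`.

By induction on `k`: if all values of `δ_k` lie in one right coset of a subgroup `C` normalized
by `H`, then `H^{(k)} ≤ C`. Arbitrary such `C` are needed because the step applies the induction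
hypothesis to relative centralizers `{z ∈ H | ∀ s ∈ S, ⁅s, z⁆ ∈ C}`. First, the right quotients
of second-half values commute modulo `C` with all first-half values, so `H^{(k)}` does too; hence
the right quotients of first-half values commute modulo `C` with `H^{(k)}`, so `H^{(k)}` commutes
with itself modulo `C`, i.e. `H^{(k+1)} ≤ C`. The theorem is the case `C = ⊥`.
-/

open Subgroup

section DeltaEval

variable {G : Type*} [Group G]

theorem deltaEval_congr : ∀ (k : ℕ) {g g' : ℕ → G}, (∀ i < 2 ^ k, g i = g' i) →
    deltaEval k g = deltaEval k g'
  | 0, _, _, h => h 0 (by positivity)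
  | k + 1, g, g', h => by
    have h2 : 2 ^ (k + 1) = 2 ^ k + 2 ^ k := by ring
    simp only [deltaEval]
    rw [deltaEval_congr k fun i hi => h i (by omega),
      deltaEval_congr k (g' := fun i => g' (i + 2 ^ k)) fun i hi => h _ (by omega)]

theorem map_deltaEval {G' F : Type*} [Group G'] [FunLike F G G'] [MonoidHomClass F G G'] (f : F) :
    ∀ (k : ℕ) (g : ℕ → G), f (deltaEval k g) = deltaEval k fun i => f (g i)
  | 0, _ => rfl
  | k + 1, g => by simp only [deltaEval, map_commutatorElement, map_deltaEval f k]

end DeltaEval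

section DeltaValues

variable {G : Type*} [Group G] (H : Subgroup G)

def deltaValues (k : ℕ) (a : ℕ → G) : Set G :=
  Set.range fun h : ℕ → H => deltaEval k fun i => a i * h i

theorem mul_mem_deltaValues_zero (a : ℕ → G) {h : G} (hh : h ∈ H) :
    a 0 * h ∈ deltaValues H 0 a :=
  ⟨fun _ => ⟨h, hh⟩, rfl⟩

theorem commutatorElement_mem_deltaValues_succ {k : ℕ} {a : ℕ → G} {u v : G}
    (hu : u ∈ deltaValues H k a) (hv : v ∈ deltaValues H k fun i => a (i + 2 ^ k)) :
    ⁅u, v⁆ ∈ deltaValues H (k + 1) a := by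
  obtain ⟨x, rfl⟩ := hu
  obtain ⟨y, rfl⟩ := hv
  refine ⟨fun i => if i < 2 ^ k then x i else y (i - 2 ^ k), ?_⟩
  show ⁅_, _⁆ = _
  congr 1
  · exact deltaEval_congr k fun i hi => by simp [hi]
  · simp

variable {H}

theorem le_normalizer_deltaValues (hH : H.Normal) (k : ℕ) (a : ℕ → G) :
    H ≤ normalizer (deltaValues H k a) := by
  rw [le_set_normalizer_iff]
  rintro h hh _ ⟨x, rfl⟩
  have hconj : ∀ i, (a i)⁻¹ * h * a i ∈ H := fun i => by
    simpa using hH.conj_mem h hh (a i)⁻¹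
  refine ⟨fun i => ⟨(a i)⁻¹ * h * a i * x i * h⁻¹,
    H.mul_mem (H.mul_mem (hconj i) (x i).2) (H.inv_mem hh)⟩, ?_⟩
  show deltaEval k _ = MulAut.conj h (deltaEval k _)
  rw [map_deltaEval]
  congr 1
  funext i
  simp only [MulAut.conj_apply]
  group

theorem mul_inv_mem_of_mem_deltaValues (hH : H.Normal) {k : ℕ} {a : ℕ → G} {u v : G}
    (hu : u ∈ deltaValues H k a) (hv : v ∈ deltaValues H k a) : v * u⁻¹ ∈ H := by
  have hval : ∀ w ∈ deltaValues H k a, (w : G ⧸ H) = deltaEval k fun i => (a i : G ⧸ H) := by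
    rintro _ ⟨x, rfl⟩
    rw [← QuotientGroup.mk'_apply, map_deltaEval]
    simp
  rw [← div_eq_mul_inv, ← QuotientGroup.eq_iff_div_mem, hval v hv, hval u hu]

end DeltaValues

section RelCentralizer

variable {G : Type*} [Group G] {H C : Subgroup G}

theorem commutatorElement_mul_inv_right (s x y : G) :
    ⁅s, y * x⁻¹⁆ = ⁅s, y⁆ * (y * x⁻¹ * ⁅s, x⁆ * (y * x⁻¹)⁻¹)⁻¹ := by
  group

def relCentralizer (hC : H ≤ normalizer (C : Set G)) (S : Set G) : Subgroup G where
  carrier := {z | z ∈ H ∧ ∀ s ∈ S, ⁅s, z⁆ ∈ C}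
  one_mem' := ⟨H.one_mem, fun s _ => by simp [C.one_mem]⟩
  mul_mem' := by
    rintro z w ⟨hz, hzS⟩ ⟨hw, hwS⟩
    refine ⟨H.mul_mem hz hw, fun s hs => ?_⟩
    rw [commutatorElement_mul_right_eq_mul_conj, mul_assoc _ z, mul_assoc]
    exact C.mul_mem (hzS s hs) (le_normalizer_iff.mp hC z hz _ (hwS s hs))
  inv_mem' := by
    rintro z ⟨hz, hzS⟩
    refine ⟨H.inv_mem hz, fun s hs => ?_⟩
    rw [commutatorElement_inv_right, ← commutatorElement_inv]
    simpa using le_normalizer_iff.mp hC z⁻¹ (H.inv_mem hz) _ (C.inv_mem (hzS s hs))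

variable {hC : H ≤ normalizer (C : Set G)} {S : Set G}

theorem le_normalizer_relCentralizer (hS : H ≤ normalizer S) :
    H ≤ normalizer (relCentralizer hC S : Set G) := by
  rw [le_normalizer_iff]
  rintro h hh z ⟨hz, hzS⟩
  refine ⟨H.mul_mem (H.mul_mem hh hz) (H.inv_mem hh), fun s hs => ?_⟩
  have hconj : ⁅s, h * z * h⁻¹⁆ = h * ⁅h⁻¹ * s * h, z⁆ * h⁻¹ := by group
  rw [hconj]
  have hs' : h⁻¹ * s * h ∈ S := by simpa using le_set_normalizer_iff.mp hS h⁻¹ (H.inv_mem hh) s hs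
  exact le_normalizer_iff.mp hC h hh _ (hzS _ hs')

theorem mul_inv_mem_relCentralizer {T : Set G} (hT : ∀ t ∈ T, ∀ t' ∈ T, t' * t⁻¹ ∈ H)
    (hST : ∀ s ∈ S, ∀ t ∈ T, ⁅t, s⁆ ∈ C) {t t' : G} (ht : t ∈ T) (ht' : t' ∈ T) :
    t' * t⁻¹ ∈ relCentralizer hC S := by
  refine ⟨hT t ht t' ht', fun s hs => ?_⟩
  rw [commutatorElement_mul_inv_right, ← commutatorElement_inv, ← commutatorElement_inv t]
  exact C.mul_mem (C.inv_mem (hST s hs t' ht'))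
    (C.inv_mem (le_normalizer_iff.mp hC _ (hT t ht t' ht') _ (C.inv_mem (hST s hs t ht))))

end RelCentralizer

theorem le_normalizer_map_subtype {G : Type*} [Group G] {H : Subgroup G} (K : Subgroup H)
    [K.Normal] : H ≤ normalizer (K.map H.subtype : Set G) := by
  simpa [normalizer_eq_top, ← MonoidHom.range_eq_map] using le_normalizer_map (H := K) H.subtype

theorem map_derivedSeries_le_of_deltaValues_mul_inv_mem {G : Type*} [Group G] {H : Subgroup G}
    (hH : H.Normal) (k : ℕ) (a : ℕ → G) (C : Subgroup G) (hC : H ≤ normalizer (C : Set G))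
    (hval : ∀ u ∈ deltaValues H k a, ∀ v ∈ deltaValues H k a, v * u⁻¹ ∈ C) :
    (derivedSeries H k).map H.subtype ≤ C := by
  induction k generalizing a C with
  | zero =>
    rw [derivedSeries_zero, ← MonoidHom.range_eq_map, range_subtype]
    intro h hh
    have hconj : (a 0)⁻¹ * h * a 0 ∈ H := by simpa using hH.conj_mem h hh (a 0)⁻¹
    simpa [mul_assoc] using hval _ (mul_mem_deltaValues_zero H a H.one_mem) _
      (mul_mem_deltaValues_zero H a hconj)
  | succ k ih =>
    set U := deltaValues H k a
    set D := (derivedSeries H k).map H.subtype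
    have hDU : D ≤ relCentralizer hC U :=
      ih _ _ (le_normalizer_relCentralizer (le_normalizer_deltaValues hH k a))
        fun v hv v' hv' => by
          have he := mul_inv_mem_of_mem_deltaValues hH hv hv'
          refine ⟨he, fun u hu => ?_⟩
          rw [commutatorElement_mul_inv_right]
          exact hval _ (le_set_normalizer_iff.mp (le_normalizer_deltaValues hH (k + 1) a) _ he _
            (commutatorElement_mem_deltaValues_succ H hu hv))
            _ (commutatorElement_mem_deltaValues_succ H hu hv')
    have hDD : D ≤ relCentralizer hC D :=
      ih _ _ (le_normalizer_relCentralizer (le_normalizer_map_subtype _))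
        fun u hu u' hu' => mul_inv_mem_relCentralizer
          (fun _ ht _ ht' => mul_inv_mem_of_mem_deltaValues hH ht ht')
          (fun _ hp u hu => (hDU hp).2 u hu) hu hu'
    rw [derivedSeries_succ, map_commutator, commutator_le]
    exact fun p hp q hq => (hDD hq).2 p hp

theorem soluble_of_delta_coset_identity_general
    {G : Type*} [Group G] (k : ℕ) (H : Subgroup G) (hH : H.Normal)
    (a : ℕ → G)
    (hid : ∀ h : ℕ → G, (∀ i, h i ∈ H) → deltaEval k (fun i => a i * h i) = 1) :
    derivedSeries H k = ⊥ := by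
  have hone : ∀ v ∈ deltaValues H k a, v = 1 := by
    rintro _ ⟨h, rfl⟩
    exact hid _ fun i => (h i).2
  have hle := map_derivedSeries_le_of_deltaValues_mul_inv_mem hH k a ⊥ le_normalizer_of_normal
    fun u hu v hv => by simp [hone u hu, hone v hv]
  rwa [le_bot_iff, map_eq_bot_iff_of_injective _ H.subtype_injective] at hle

/-- If `H` is a normal subgroup of `G` and `a_1, …, a_{2^k}` are elements of `G`
such that `δ_k(a_1 h_1, …, a_{2^k} h_{2^k}) = 1` for all `h_i ∈ H`, then `H` is
soluble of derived length at most `k`. -/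
theorem soluble_of_delta_coset_identity
    {G : Type*} [Group G] (k : ℕ) (hk : 0 < k) (H : Subgroup G) (hH : H.Normal)
    (a : ℕ → G)
    (hid : ∀ h : ℕ → G, (∀ i, h i ∈ H) → deltaEval k (fun i => a i * h i) = 1) :
    derivedSeries H k = ⊥ :=
  soluble_of_delta_coset_identity_general k H hH a hid
end

section
/- Let H be an abelian normal subgroup of a group G and suppose G = ⟨H, a_1, a_2, …, a_s⟩ for elements a_1, …, a_s ∈ G. Then [H,G] = [H,a_1][H,a_2]⋯[H,a_s], the setwise product of the subgroups [H,a_i]. -/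
/-!
Let `N` be the join of the subgroups `[H, aᵢ]`. Each `[H, aᵢ]` lies in the abelian group `H`, so
the `[H, aᵢ]` commute with each other and their join is their setwise product. It remains to show
`[H, G] = N`. The group `N` is normal: `H` centralizes it, and `aᵢ` normalizes it because for
`n ∈ N ≤ H` both `aᵢ n aᵢ⁻¹` and `aᵢ⁻¹ n aᵢ` differ from `n` by an element of `[H, aᵢ]`. Modulo the
normal subgroup `N`, every generator of `G` commutes with `H`, hence so does all of `G`.
-/

open scoped commutatorElement

theorem Fin.noncommProd_univ_eq_prod_ofFn {M : Type*} [Monoid M] {n : ℕ} (f : Fin n → M)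
    (comm : Set.Pairwise ↑(Finset.univ : Finset (Fin n)) (Function.onFun Commute f)) :
    Finset.univ.noncommProd f comm = (List.ofFn f).prod := by
  rw [List.ofFn_eq_map]
  exact Multiset.noncommProd_coe ((List.finRange n).map f) _

namespace Subgroup

variable {G : Type*} [Group G]

theorem mem_normalizer_of_conj_mem {N : Subgroup G} {g : G}
    (hconj : ∀ n ∈ N, g * n * g⁻¹ ∈ N) (hconj_inv : ∀ n ∈ N, g⁻¹ * n * g ∈ N) :
    g ∈ normalizer (N : Set G) :=
  mem_normalizer_iff.2 fun n =>
    ⟨hconj n, fun hn => by simpa [mul_assoc] using hconj_inv _ hn⟩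

theorem commutatorElement_mem_of_mem_closure_s14 {N : Subgroup G} [N.Normal] {S : Set G} {x g : G}
    (hg : g ∈ closure S) (hS : ∀ s ∈ S, ⁅x, s⁆ ∈ N) : ⁅x, g⁆ ∈ N := by
  induction hg using closure_induction with
  | mem s hs => exact hS s hs
  | one => simp
  | mul y z _ _ hy hz =>
    rw [commutatorElement_mul_right_eq_mul_conj, mul_assoc _ y, mul_assoc]
    exact N.mul_mem hy (‹N.Normal›.conj_mem _ hz y)
  | inv y _ hy =>
    rw [commutatorElement_inv_right, ← commutatorElement_inv]
    simpa using ‹N.Normal›.conj_mem _ (N.inv_mem hy) y⁻¹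

theorem mem_iSup_iff_exists_prod_ofFn {s : ℕ} {K : Fin s → Subgroup G}
    (hcomm : Pairwise fun i j => ∀ x y : G, x ∈ K i → y ∈ K j → Commute x y) {g : G} :
    g ∈ ⨆ i, K i ↔ ∃ f : Fin s → G, (∀ i, f i ∈ K i) ∧ g = (List.ofFn f).prod := by
  rw [← noncommPiCoprod_range (hcomm := hcomm)]
  constructor
  · rintro ⟨x, rfl⟩
    exact ⟨fun i => x i, fun i => (x i).2, Fin.noncommProd_univ_eq_prod_ofFn (fun i => (x i : G))
      fun i _ j _ hij => hcomm hij _ _ (x i).2 (x j).2⟩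
  · rintro ⟨f, hf, rfl⟩
    exact ⟨fun i => ⟨f i, hf i⟩, Fin.noncommProd_univ_eq_prod_ofFn f
      fun i _ j _ hij => hcomm hij _ _ (hf i) (hf j)⟩

end Subgroup

section CommutatorWithElement

variable {G : Type*} [Group G] {H : Subgroup G}

open Subgroup

def commutatorWithElement (H : Subgroup G) (a : G) : Subgroup G :=
  closure {x | ∃ h ∈ H, x = ⁅h, a⁆}

theorem commutatorElement_mem_commutatorWithElement {h : G} (hh : h ∈ H) (a : G) :
    ⁅h, a⁆ ∈ commutatorWithElement H a :=
  subset_closure ⟨h, hh, rfl⟩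

theorem commutatorWithElement_le_commutator_top (a : G) :
    commutatorWithElement H a ≤ ⁅H, ⊤⁆ :=
  (closure_le _).2 fun _ ⟨_, hh, hx⟩ => hx ▸ commutator_mem_commutator hh (mem_top a)

theorem commutatorWithElement_le (hH : H.Normal) (a : G) : commutatorWithElement H a ≤ H :=
  (commutatorWithElement_le_commutator_top a).trans (commutator_top_right_le_iff.2 hH)

theorem mem_normalizer_of_commutatorWithElement_le {N : Subgroup G} {a : G} (hH : H.Normal)
    (hNH : N ≤ H) (haN : commutatorWithElement H a ≤ N) : a ∈ normalizer (N : Set G) := by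
  refine mem_normalizer_of_conj_mem (fun n hn => ?_) (fun n hn => ?_)
  · have hconj : a * n * a⁻¹ = n * ⁅n⁻¹, a⁆ := by group
    rw [hconj]
    exact N.mul_mem hn (haN (commutatorElement_mem_commutatorWithElement (H.inv_mem (hNH hn)) a))
  · set m := a⁻¹ * n * a
    have hm : m ∈ H := by simpa using hH.conj_mem n (hNH hn) a⁻¹
    have hconj : m = ⁅m, a⁆ * n := by simp only [m]; group
    rw [hconj]
    exact N.mul_mem (haN (commutatorElement_mem_commutatorWithElement hm a)) hn

section AbelianNormal

variable {s : ℕ} {a : Fin s → G}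

theorem iSup_commutatorWithElement_normal (hH : H.Normal)
    (hab : ∀ x ∈ H, ∀ y ∈ H, x * y = y * x)
    (hgen : closure ((H : Set G) ∪ Set.range a) = ⊤) :
    (⨆ i, commutatorWithElement H (a i)).Normal := by
  set N := ⨆ i, commutatorWithElement H (a i)
  have hNH : N ≤ H := iSup_le fun i => commutatorWithElement_le hH (a i)
  have hH_centralizes : H ≤ centralizer (N : Set G) :=
    fun h hh => mem_centralizer_iff.2 fun n hn => hab n (hNH hn) h hh
  refine normalizer_eq_top_iff.1 (eq_top_iff.2 (hgen ▸ (closure_le _).2 ?_))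
  refine Set.union_subset (fun h hh => centralizer_le_normalizer _ (hH_centralizes hh)) ?_
  exact Set.range_subset_iff.2 fun i => mem_normalizer_of_commutatorWithElement_le hH hNH
    (le_iSup (fun j => commutatorWithElement H (a j)) i)

theorem commutator_top_eq_iSup_commutatorWithElement (hH : H.Normal)
    (hab : ∀ x ∈ H, ∀ y ∈ H, x * y = y * x)
    (hgen : closure ((H : Set G) ∪ Set.range a) = ⊤) :
    ⁅H, ⊤⁆ = ⨆ i, commutatorWithElement H (a i) := by
  have := iSup_commutatorWithElement_normal hH hab hgen
  refine le_antisymm (commutator_le.2 fun h hh g _ => ?_)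
    (iSup_le fun i => commutatorWithElement_le_commutator_top (a i))
  refine commutatorElement_mem_of_mem_closure_s14 (hgen ▸ mem_top g) fun x hx => ?_
  rcases hx with hxH | ⟨i, rfl⟩
  · rw [commutatorElement_eq_one_iff_mul_comm.2 (hab h hh x hxH)]
    exact one_mem _
  · exact mem_iSup_of_mem i (commutatorElement_mem_commutatorWithElement hh (a i))

end AbelianNormal

end CommutatorWithElement

/-- If `H` is an abelian normal subgroup of `G` and `G = ⟨H, a_1, …, a_s⟩`, then
`[H, G]` is the setwise product of the subgroups `[H, a_i]`, where `[H, a]` denotes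
the subgroup generated by all `[h, a]` with `h ∈ H`. -/
theorem commutator_with_group_eq_product_of_commutators_with_generators
    {G : Type*} [Group G] (H : Subgroup G) (hH : H.Normal)
    (hab : ∀ x ∈ H, ∀ y ∈ H, x * y = y * x)
    (s : ℕ) (a : Fin s → G)
    (hgen : Subgroup.closure ((H : Set G) ∪ Set.range a) = ⊤) :
    ∀ g : G, g ∈ ⁅H, (⊤ : Subgroup G)⁆ ↔
      ∃ f : Fin s → G,
        (∀ i, f i ∈ Subgroup.closure {x : G | ∃ h ∈ H, x = ⁅h, a i⁆}) ∧
        g = (List.ofFn f).prod := by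
  intro g
  rw [commutator_top_eq_iSup_commutatorWithElement hH hab hgen]
  exact Subgroup.mem_iSup_iff_exists_prod_ofFn fun i j _ x y hx hy =>
    hab x (commutatorWithElement_le hH (a i) hx) y (commutatorWithElement_le hH (a j) hy)
end
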